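/- Let X be a shift space with a synchronizing word v, and suppose Σ_{n=1}^∞ Λ_n(B) e^{−nP} < ∞, where B is the set of words in L not containing v. Then there exists a word u ∈ L such that vuv ∈ L. -/

import Mathlib

open Filter Real

/-- The shift map on bi-infinite sequences. -/
def shift {A : Type*} (x : ℤ → A) : ℤ → A := fun n => x (n + 1)

/-- Birkhoff sum `S_n φ`. -/
noncomputable def birk {A : Type*} (φ : (ℤ → A) → ℝ) (n : ℕ) (x : ℤ → A) : ℝ :=
  ∑ k ∈ Finset.range n, φ (shift^[k] x)

/-- Forward cylinder of a word `w : List A` inside `X`. -/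
def cylL {A : Type*} (X : Set (ℤ → A)) (w : List A) : Set (ℤ → A) :=
  {x ∈ X | ∀ i : Fin w.length, x ((i : ℕ) : ℤ) = w.get i}

/-- The language of `X` (as a set of words). -/
def langSet {A : Type*} (X : Set (ℤ → A)) : Set (List A) :=
  {w : List A | (cylL X w).Nonempty}

/-- The weight `Φ(w) = sup_{x ∈ [w]^+} S_{|w|} φ(x)`. -/
noncomputable def PhiL {A : Type*} (X : Set (ℤ → A)) (φ : (ℤ → A) → ℝ) (w : List A) : ℝ :=
  sSup (birk φ w.length '' cylL X w)

open Classical in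
/-- Partition sum restricted to a collection of words:
`Λ_n(D) = Σ_{w ∈ D, |w| = n} e^{Φ(w)}`. -/
noncomputable def LamD {A : Type*} [Fintype A] (X : Set (ℤ → A)) (φ : (ℤ → A) → ℝ)
    (D : Set (List A)) (n : ℕ) : ℝ :=
  ∑ w : Fin n → A, if List.ofFn w ∈ D then Real.exp (PhiL X φ (List.ofFn w)) else 0

/-! If no word `v u v` lies in the language `L`, every word of `L` either avoids `v` or, cut at the
first occurrence of `v`, is `a v b` with `a` and `b` avoiding `v` (a further occurrence of `v` in
`b` would produce a word `v c v` of `L`). Hence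
`Λ_{k+|v|}(L) ≤ Λ_{k+|v|}(B) + e^{Φ(v)} Σ_{i+j=k} Λ_i(B) Λ_j(B)`.
Multiplied by `e^{-(k+|v|)P}`, the left side is at least `1` because `Λ_n(L) ≥ e^{nP}` (Fekete's
lemma for the submultiplicative sequence `Λ_n(L)`), whereas the right side is the general term of
a summable series: a shift of `Λ_n(B) e^{-nP}` plus a multiple of its Cauchy square. -/

open Finset.HasAntidiagonal

theorem List.IsInfix.exists_eq_append_append_not_isInfix {α : Type*} {v w : List α}
    (hv : v ≠ []) (h : v <:+: w) : ∃ a b, w = a ++ v ++ b ∧ ¬ v <:+: a := by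
  classical
  have hex : ∃ n, ∃ a b, a.length = n ∧ w = a ++ v ++ b := by
    obtain ⟨a, b, hw⟩ := h
    exact ⟨_, a, b, rfl, hw.symm⟩
  obtain ⟨a, b, ha, hw⟩ := Nat.find_spec hex
  refine ⟨a, b, hw, ?_⟩
  rintro ⟨c, d, rfl⟩
  have hmin := Nat.find_min' hex ⟨c, d ++ v ++ b, rfl, by simp [hw]⟩
  have hvpos := List.length_pos_iff.2 hv
  simp only [List.length_append] at ha
  omega

section Language

variable {A : Type*} {X : Set (ℤ → A)}

lemma shift_iterate_apply (x : ℤ → A) (m : ℕ) (n : ℤ) : shift^[m] x n = x (n + m) := by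
  induction m generalizing n with
  | zero => simp
  | succ m ih =>
    rw [Function.iterate_succ_apply', shift, ih]
    push_cast
    ring_nf

lemma mapsTo_shift_iterate (hXinv : shift '' X = X) (m : ℕ) : Set.MapsTo shift^[m] X X :=
  Set.MapsTo.iterate (fun _ hx => hXinv ▸ Set.mem_image_of_mem shift hx) m

lemma cylL_subset (w : List A) : cylL X w ⊆ X := Set.sep_subset _ _

lemma mem_cylL_of_mem_cylL_append {x : ℤ → A} {u w : List A} (hx : x ∈ cylL X (u ++ w)) :
    x ∈ cylL X u := by
  refine ⟨hx.1, fun i => ?_⟩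
  have := hx.2 ⟨i, by simp; omega⟩
  simpa [List.getElem_append_left] using this

lemma shift_iterate_mem_cylL (hXinv : shift '' X = X) {x : ℤ → A} {u w : List A}
    (hx : x ∈ cylL X (u ++ w)) : shift^[u.length] x ∈ cylL X w := by
  refine ⟨mapsTo_shift_iterate hXinv _ hx.1, fun i => ?_⟩
  have := hx.2 ⟨u.length + i, by simp⟩
  simpa [shift_iterate_apply, add_comm] using this

lemma mem_langSet_of_isInfix (hXinv : shift '' X = X) {u w : List A} (hw : w ∈ langSet X)
    (h : u <:+: w) : u ∈ langSet X := by
  obtain ⟨x, hx⟩ := hw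
  obtain ⟨s, t, rfl⟩ := h
  exact ⟨_, shift_iterate_mem_cylL hXinv (mem_cylL_of_mem_cylL_append hx)⟩

lemma ofFn_mem_langSet {x : ℤ → A} (hx : x ∈ X) (n : ℕ) :
    List.ofFn (fun i : Fin n => x i) ∈ langSet X :=
  ⟨x, hx, fun i => by simp⟩

def gluedWords (X : Set (ℤ → A)) (D : Set (List A)) (v : List A) (E : Set (List A))
    (i j : ℕ) : Set (List A) :=
  langSet X ∩
    Set.image2 (fun a b => a ++ v ++ b) {a ∈ D | a.length = i} {b ∈ E | b.length = j}

def wordsAvoiding (X : Set (ℤ → A)) (v : List A) : Set (List A) :=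
  {w | w ∈ langSet X ∧ ¬ v <:+: w}

lemma mem_union_biUnion_gluedWords (hXinv : shift '' X = X) {v : List A} (hv : v ≠ [])
    (hno : ∀ u, v ++ u ++ v ∉ langSet X) {k : ℕ} {w : List A} (hw : w ∈ langSet X)
    (hlen : w.length = k + v.length) :
    w ∈ wordsAvoiding X v ∪ ⋃ p ∈ antidiagonal k,
      gluedWords X (wordsAvoiding X v) v (wordsAvoiding X v) p.1 p.2 := by
  by_cases hvw : v <:+: w
  · obtain ⟨a, b, rfl, ha⟩ := hvw.exists_eq_append_append_not_isInfix hv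
    have hb : ¬ v <:+: b := by
      rintro ⟨c, d, rfl⟩
      exact hno c (mem_langSet_of_isInfix hXinv hw ⟨a, d, by simp⟩)
    have haL : a ∈ langSet X := mem_langSet_of_isInfix hXinv hw ⟨[], v ++ b, by simp⟩
    have hbL : b ∈ langSet X := mem_langSet_of_isInfix hXinv hw ⟨a ++ v, [], by simp⟩
    refine Or.inr (Set.mem_biUnion (x := (a.length, b.length)) ?_ ?_)
    · simp only [List.length_append] at hlen
      simp only [Finset.mem_coe, mem_antidiagonal]
      omega
    · exact ⟨hw, a, ⟨⟨haL, ha⟩, rfl⟩, b, ⟨⟨hbL, hb⟩, rfl⟩, rfl⟩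
  · exact Or.inl ⟨hw, hvw⟩

end Language

section Weight

variable {A : Type*} {X : Set (ℤ → A)} {φ : (ℤ → A) → ℝ}

lemma birk_add (m n : ℕ) (x : ℤ → A) :
    birk φ (m + n) x = birk φ m x + birk φ n (shift^[m] x) := by
  simp only [birk, Finset.sum_range_add, ← Function.iterate_add_apply, add_comm]

lemma bddAbove_birk_image (hXinv : shift '' X = X) (hφ : BddAbove (φ '' X)) (n : ℕ) :
    BddAbove (birk φ n '' X) := by
  obtain ⟨C, hC⟩ := hφ
  refine ⟨n * C, ?_⟩
  rintro _ ⟨x, hx, rfl⟩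
  calc birk φ n x ≤ ∑ _k ∈ Finset.range n, C :=
        Finset.sum_le_sum fun k _ => hC ⟨_, mapsTo_shift_iterate hXinv k hx, rfl⟩
    _ = n * C := by simp

lemma PhiL_nil : PhiL X φ [] = 0 := by
  rcases X.eq_empty_or_nonempty with rfl | hX
  · simp [PhiL, cylL]
  · have hcyl : cylL X [] = X := by ext; simp [cylL]
    have hbirk : birk φ 0 = fun _ => 0 := by funext; simp [birk]
    rw [PhiL, List.length_nil, hcyl, hbirk, hX.image_const, csSup_singleton]

lemma PhiL_append_le (hXinv : shift '' X = X) (hφ : BddAbove (φ '' X)) {u w : List A}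
    (huw : u ++ w ∈ langSet X) : PhiL X φ (u ++ w) ≤ PhiL X φ u + PhiL X φ w := by
  have hbdd (w' : List A) : BddAbove (birk φ w'.length '' cylL X w') :=
    (bddAbove_birk_image hXinv hφ _).mono (Set.image_mono (cylL_subset w'))
  refine csSup_le (huw.image _) ?_
  rintro _ ⟨x, hx, rfl⟩
  rw [List.length_append, birk_add]
  exact add_le_add (le_csSup (hbdd u) ⟨x, mem_cylL_of_mem_cylL_append hx, rfl⟩)
    (le_csSup (hbdd w) ⟨_, shift_iterate_mem_cylL hXinv hx, rfl⟩)

end Weight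

lemma Subadditive.mul_le_of_tendsto_div {u : ℕ → ℝ} (h : Subadditive u) {P : ℝ}
    (hP : Tendsto (fun n => u n / n) atTop (nhds P)) {n : ℕ} (hn : n ≠ 0) : n * P ≤ u n := by
  have hbdd := hP.bddBelow_range
  have hlim : h.lim = P := tendsto_nhds_unique (h.tendsto_lim hbdd) hP
  have := hlim ▸ h.lim_le_div hbdd hn
  rwa [le_div_iff₀ (by positivity), mul_comm] at this

section PartitionSum

variable {A : Type*} [Fintype A] {X : Set (ℤ → A)} {φ : (ℤ → A) → ℝ}

open Classical in
lemma LamD_eq_sum (D : Set (List A)) (n : ℕ) :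
    LamD X φ D n =
      ∑ w ∈ (List.finite_length_eq A n).toFinset with w ∈ D, exp (PhiL X φ w) := by
  have himage : (List.finite_length_eq A n).toFinset =
      Finset.univ.image (List.ofFn : (Fin n → A) → List A) := by
    ext w
    simp only [Set.Finite.mem_toFinset, Set.mem_ofPred_eq, Finset.mem_image, Finset.mem_univ,
      true_and]
    constructor
    · rintro rfl
      exact ⟨w.get, List.ofFn_get w⟩
    · rintro ⟨f, rfl⟩
      exact List.length_ofFn
  rw [Finset.sum_filter, himage, Finset.sum_image fun f _ g _ h => List.ofFn_injective h, LamD]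

lemma LamD_mono_of_length_eq {D E : Set (List A)} {n : ℕ}
    (h : ∀ w ∈ D, w.length = n → w ∈ E) : LamD X φ D n ≤ LamD X φ E n := by
  classical
  rw [LamD_eq_sum, LamD_eq_sum]
  refine Finset.sum_le_sum_of_subset_of_nonneg (fun w hw => ?_) fun _ _ _ => (exp_pos _).le
  simp only [Finset.mem_filter, Set.Finite.mem_toFinset, Set.mem_ofPred_eq] at hw ⊢
  exact ⟨hw.1, h w hw.2 hw.1⟩

lemma LamD_union_le (D E : Set (List A)) (n : ℕ) :
    LamD X φ (D ∪ E) n ≤ LamD X φ D n + LamD X φ E n := by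
  rw [LamD, LamD, LamD, ← Finset.sum_add_distrib]
  refine Finset.sum_le_sum fun f _ => ?_
  have := (exp_pos (PhiL X φ (List.ofFn f))).le
  by_cases hD : List.ofFn f ∈ D <;> by_cases hE : List.ofFn f ∈ E <;> simp [hD, hE, this]

lemma LamD_biUnion_le {ι : Type*} (s : Finset ι) (D : ι → Set (List A)) (n : ℕ) :
    LamD X φ (⋃ i ∈ s, D i) n ≤ ∑ i ∈ s, LamD X φ (D i) n := by
  classical
  induction s using Finset.induction_on with
  | empty => simp [LamD]
  | insert i s hi ih =>
    rw [Finset.set_biUnion_insert, Finset.sum_insert hi]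
    exact (LamD_union_le _ _ _).trans (add_le_add_right ih _)

lemma LamD_langSet_pos (hX : X.Nonempty) (n : ℕ) : 0 < LamD X φ (langSet X) n := by
  classical
  obtain ⟨x, hx⟩ := hX
  rw [LamD_eq_sum]
  exact Finset.sum_pos (fun _ _ => exp_pos _) ⟨List.ofFn fun i : Fin n => x i, by
    simp [ofFn_mem_langSet hx]⟩

lemma LamD_gluedWords_le (hXinv : shift '' X = X) (hφ : BddAbove (φ '' X))
    (D E : Set (List A)) (v : List A) (i j n : ℕ) :
    LamD X φ (gluedWords X D v E i j) n ≤ LamD X φ D i * exp (PhiL X φ v) * LamD X φ E j := by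
  classical
  set W : ℕ → Finset (List A) := fun k => (List.finite_length_eq A k).toFinset
  set S := ((W i).filter (· ∈ D) ×ˢ (W j).filter (· ∈ E)).filter
    fun p => p.1 ++ v ++ p.2 ∈ langSet X
  rw [LamD_eq_sum, LamD_eq_sum, LamD_eq_sum, Finset.sum_mul, Finset.sum_mul_sum,
    ← Finset.sum_product']
  calc ∑ w ∈ W n with w ∈ gluedWords X D v E i j, exp (PhiL X φ w)
      ≤ ∑ w ∈ S.image (fun p => p.1 ++ v ++ p.2), exp (PhiL X φ w) := by
        refine Finset.sum_le_sum_of_subset_of_nonneg ?_ fun _ _ _ => (exp_pos _).le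
        intro w hw
        obtain ⟨-, hwL, a, ⟨haD, rfl⟩, b, ⟨hbE, rfl⟩, rfl⟩ := Finset.mem_filter.1 hw
        exact Finset.mem_image.2 ⟨(a, b), by simpa [S, W, haD, hbE] using hwL, rfl⟩
    _ ≤ ∑ p ∈ S, exp (PhiL X φ (p.1 ++ v ++ p.2)) :=
        Finset.sum_image_le_of_nonneg fun _ _ => (exp_pos _).le
    _ ≤ ∑ p ∈ S, exp (PhiL X φ p.1) * exp (PhiL X φ v) * exp (PhiL X φ p.2) := by
        refine Finset.sum_le_sum fun p hp => ?_
        have hL : p.1 ++ v ++ p.2 ∈ langSet X := (Finset.mem_filter.1 hp).2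
        have hL' : p.1 ++ v ∈ langSet X :=
          mem_langSet_of_isInfix hXinv hL (List.prefix_append _ _).isInfix
        rw [← exp_add, ← exp_add]
        exact exp_le_exp.2 ((PhiL_append_le hXinv hφ hL).trans
          (add_le_add (PhiL_append_le hXinv hφ hL') le_rfl))
    _ ≤ _ := Finset.sum_le_sum_of_subset_of_nonneg (Finset.filter_subset _ _)
        fun _ _ _ => by positivity

lemma LamD_langSet_add_le (hXinv : shift '' X = X) (hφ : BddAbove (φ '' X)) (m n : ℕ) :
    LamD X φ (langSet X) (m + n) ≤ LamD X φ (langSet X) m * LamD X φ (langSet X) n := by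
  calc LamD X φ (langSet X) (m + n)
      ≤ LamD X φ (gluedWords X (langSet X) [] (langSet X) m n) (m + n) := by
        refine LamD_mono_of_length_eq fun w hw hlen => ⟨hw, w.take m, ?_, w.drop m, ?_, by simp⟩
        · refine ⟨mem_langSet_of_isInfix hXinv hw (List.take_prefix _ _).isInfix, ?_⟩
          simp only [List.length_take]
          omega
        · refine ⟨mem_langSet_of_isInfix hXinv hw (List.drop_suffix _ _).isInfix, ?_⟩
          simp only [List.length_drop]
          omega
    _ ≤ _ := by
        simpa [PhiL_nil] using
          LamD_gluedWords_le hXinv hφ (langSet X) (langSet X) [] m n (m + n)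

lemma exp_mul_le_LamD_langSet (hXinv : shift '' X = X) (hφ : BddAbove (φ '' X))
    (hX : X.Nonempty) {P : ℝ}
    (hP : Tendsto (fun n : ℕ => log (LamD X φ (langSet X) n) / n) atTop (nhds P))
    {n : ℕ} (hn : n ≠ 0) : exp (n * P) ≤ LamD X φ (langSet X) n := by
  have hpos := LamD_langSet_pos (φ := φ) hX
  have hsub : Subadditive fun n => log (LamD X φ (langSet X) n) := fun m n => by
    rw [← log_mul (hpos m).ne' (hpos n).ne']
    exact log_le_log (hpos _) (LamD_langSet_add_le hXinv hφ m n)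
  rw [← exp_log (hpos n)]
  exact exp_le_exp.2 (hsub.mul_le_of_tendsto_div hP hn)

lemma LamD_langSet_le_of_forall_append_notMem (hXinv : shift '' X = X)
    (hφ : BddAbove (φ '' X)) {v : List A} (hv : v ≠ []) (hno : ∀ u, v ++ u ++ v ∉ langSet X)
    (k : ℕ) :
    LamD X φ (langSet X) (k + v.length) ≤ LamD X φ (wordsAvoiding X v) (k + v.length) +
      exp (PhiL X φ v) * ∑ p ∈ antidiagonal k,
        LamD X φ (wordsAvoiding X v) p.1 * LamD X φ (wordsAvoiding X v) p.2 := by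
  set B := wordsAvoiding X v
  calc LamD X φ (langSet X) (k + v.length)
      ≤ LamD X φ (B ∪ ⋃ p ∈ antidiagonal k, gluedWords X B v B p.1 p.2) (k + v.length) :=
        LamD_mono_of_length_eq fun w hw hlen => mem_union_biUnion_gluedWords hXinv hv hno hw hlen
    _ ≤ LamD X φ B (k + v.length) + ∑ p ∈ antidiagonal k,
          LamD X φ (gluedWords X B v B p.1 p.2) (k + v.length) :=
        (LamD_union_le _ _ _).trans (add_le_add le_rfl (LamD_biUnion_le _ _ _))
    _ ≤ _ := by
        rw [Finset.mul_sum]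
        gcongr with p
        linarith [LamD_gluedWords_le hXinv hφ B B v p.1 p.2 (k + v.length)]

end PartitionSum

lemma one_le_add_mul_sum_antidiagonal_of_le {Λ b : ℕ → ℝ} {P c : ℝ} {m k : ℕ}
    (hlow : exp (((k + m : ℕ) : ℝ) * P) ≤ Λ (k + m))
    (hup : Λ (k + m) ≤ b (k + m) + c * ∑ p ∈ antidiagonal k, b p.1 * b p.2) :
    1 ≤ b (k + m) * exp (-((k + m : ℕ) : ℝ) * P) + c * exp (-(m : ℝ) * P) *
      ∑ p ∈ antidiagonal k,
        b p.1 * exp (-(p.1 : ℝ) * P) * (b p.2 * exp (-(p.2 : ℝ) * P)) := by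
  have hsplit : ∀ p ∈ antidiagonal k, exp (-((k + m : ℕ) : ℝ) * P) =
      exp (-(m : ℝ) * P) * exp (-(p.1 : ℝ) * P) * exp (-(p.2 : ℝ) * P) := by
    intro p hp
    rw [← exp_add, ← exp_add, ← mem_antidiagonal.1 hp]
    push_cast
    ring_nf
  calc (1 : ℝ) = exp (((k + m : ℕ) : ℝ) * P) * exp (-((k + m : ℕ) : ℝ) * P) := by
        rw [← exp_add, neg_mul, add_neg_cancel, exp_zero]
    _ ≤ (b (k + m) + c * ∑ p ∈ antidiagonal k, b p.1 * b p.2) *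
          exp (-((k + m : ℕ) : ℝ) * P) := by
        gcongr
        exact hlow.trans hup
    _ = _ := by
        simp only [add_mul, Finset.mul_sum, Finset.sum_mul]
        congr 1
        exact Finset.sum_congr rfl fun p hp => by rw [hsplit p hp]; ring

lemma summable_add_mul_sum_antidiagonal {a : ℕ → ℝ} (ha : Summable a) (m : ℕ) (c : ℝ) :
    Summable fun k => a (k + m) + c * ∑ p ∈ antidiagonal k, a p.1 * a p.2 := by
  have hnorm : Summable fun n => ‖a n‖ := summable_norm_iff.2 ha
  exact ((summable_nat_add_iff m).2 ha).add
    ((summable_sum_mul_antidiagonal_of_summable_norm' hnorm ha hnorm ha).mul_left c)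

theorem exists_connecting_word_general {A : Type*} [Fintype A]
    [TopologicalSpace A]
    (X : Set (ℤ → A)) (hXcl : IsClosed X) (hXinv : shift '' X = X)
    (φ : (ℤ → A) → ℝ) (hφ : ContinuousOn φ X)
    (v : List A) (hvL : v ∈ langSet X)
    (P : ℝ)
    (hP : Tendsto (fun n : ℕ => Real.log (LamD X φ (langSet X) n) / n) atTop (nhds P))
    (hsum : Summable (fun n : ℕ =>
      LamD X φ {w | w ∈ langSet X ∧ ¬ v <:+: w} n * Real.exp (-(n : ℝ) * P))) :
    ∃ u : List A, (v ++ u ++ v) ∈ langSet X := by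
  by_contra! hno
  have hv : v ≠ [] := by
    rintro rfl
    exact hno [] hvL
  have hX : X.Nonempty := hvL.mono (cylL_subset v)
  have hφX : BddAbove (φ '' X) := hXcl.isCompact.bddAbove_image hφ
  have hone (k : ℕ) := one_le_add_mul_sum_antidiagonal_of_le
    (exp_mul_le_LamD_langSet hXinv hφX hX hP (Nat.add_pos_right k (List.length_pos_iff.2 hv)).ne')
    (LamD_langSet_le_of_forall_append_notMem hXinv hφX hv hno k)
  obtain ⟨k, hk⟩ := ((summable_add_mul_sum_antidiagonal hsum v.length _).tendsto_atTop_zero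
    |>.eventually (gt_mem_nhds one_pos)).exists
  exact (hone k).not_gt hk

/-- If `v` is a synchronizing word and `Σ_n Λ_n(B) e^{−nP} < ∞`, where `B` is the set of
words of the language not containing `v`, then there is a word `u` with `vuv ∈ L`. -/
theorem exists_connecting_word {A : Type*} [Fintype A]
    [TopologicalSpace A] [DiscreteTopology A]
    (X : Set (ℤ → A)) (hXcl : IsClosed X) (hXinv : shift '' X = X)
    (φ : (ℤ → A) → ℝ) (hφ : ContinuousOn φ X)
    (v : List A) (hvL : v ∈ langSet X)
    (hsync : ∀ u w : List A, (u ++ v) ∈ langSet X → (v ++ w) ∈ langSet X →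
      (u ++ v ++ w) ∈ langSet X)
    (P : ℝ)
    (hP : Tendsto (fun n : ℕ => Real.log (LamD X φ (langSet X) n) / n) atTop (nhds P))
    (hsum : Summable (fun n : ℕ =>
      LamD X φ {w | w ∈ langSet X ∧ ¬ v <:+: w} n * Real.exp (-(n : ℝ) * P))) :
    ∃ u : List A, (v ++ u ++ v) ∈ langSet X :=
  exists_connecting_word_general X hXcl hXinv φ hφ v hvL P hP hsum
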